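/- Let (X,μ) be a σ-finite measure space, B a Banach space, and Φ₁ : [0,∞) → [0,∞) defined by Φ₁(x) = x² for 0 ≤ x ≤ 1 and Φ₁(x) = 2x − 1 for x > 1. For a strongly measurable f : X → B define the Luxemburg norm ‖f‖_{Φ₁} = inf{ k > 0 : ∫_X Φ₁(‖f(x)‖_B / k) dμ(x) ≤ 1 } (inf ∅ = ∞), and let A(f) = inf{ ‖g‖_{L¹(X,B)} + ‖h‖_{L²(X,B)} : f = g + h a.e., g ∈ L¹(X,B), h ∈ L²(X,B) } (inf ∅ = ∞). Then (1/2)·A(f) ≤ ‖f‖_{Φ₁} ≤ 2·A(f). -/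

import Mathlib

open MeasureTheory
open scoped ENNReal

/-! If `∫ Φ₁(‖f‖ / k) ≤ 1`, cut `f` at height `k`: the large part `g = f·1_{‖f‖ > k}` has
`‖g‖₁ ≤ k` because `t ≤ Φ₁(t)` for `t ≥ 1`, and the small part `h = f·1_{‖f‖ ≤ k}` has `‖h‖₂ ≤ k`
because `Φ₁(t) = t²` for `t ≤ 1`; hence `A(f) ≤ 2k`. Conversely, if `f = g + h`, the pointwise
bound `Φ₁(u + v) ≤ 2u + v²` shows that every `k ≥ 2(‖g‖₁ + ‖h‖₂)` has `∫ Φ₁(‖f‖ / k) ≤ 1`. -/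

/-- The Orlicz function `Φ₁(x) = x²` for `0 ≤ x ≤ 1`, `Φ₁(x) = 2x − 1` for `x > 1`. -/
noncomputable def Phi1 (x : ℝ) : ℝ := if x ≤ 1 then x ^ 2 else 2 * x - 1

/-- The Luxemburg norm associated with `Φ₁` (with `inf ∅ = ∞`). -/
noncomputable def luxNorm {X B : Type*} [MeasurableSpace X] [NormedAddCommGroup B]
    (μ : Measure X) (f : X → B) : ℝ≥0∞ :=
  sInf {k : ℝ≥0∞ | 0 < k ∧ k ≠ ⊤ ∧
    ∫⁻ x, ENNReal.ofReal (Phi1 (‖f x‖ / k.toReal)) ∂μ ≤ 1}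

/-- The `L¹ + L²` decomposition quantity `A(f)` (with `inf ∅ = ∞`). -/
noncomputable def sumL1L2 {X B : Type*} [MeasurableSpace X] [NormedAddCommGroup B]
    (μ : Measure X) (f : X → B) : ℝ≥0∞ :=
  sInf {r : ℝ≥0∞ | ∃ g h : X → B, Integrable g μ ∧ MemLp h 2 μ ∧ f =ᵐ[μ] g + h ∧
    r = ENNReal.ofReal ((∫ x, ‖g x‖ ∂μ) + Real.sqrt (∫ x, ‖h x‖ ^ 2 ∂μ))}

lemma Phi1_nonneg (t : ℝ) : 0 ≤ Phi1 t := by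
  unfold Phi1; split_ifs <;> nlinarith

lemma Phi1_of_le_one {t : ℝ} (ht : t ≤ 1) : Phi1 t = t ^ 2 := if_pos ht

lemma le_Phi1 {t : ℝ} (ht : 1 ≤ t) : t ≤ Phi1 t := by
  unfold Phi1; split_ifs <;> nlinarith

lemma Phi1_le_two_mul_add_sq {t u v : ℝ} (ht : 0 ≤ t) (hu : 0 ≤ u) (hv : 0 ≤ v)
    (htuv : t ≤ u + v) : Phi1 t ≤ 2 * u + v ^ 2 := by
  unfold Phi1; split_ifs with h
  · rcases le_or_gt (u + 2 * v) 2 with h2 | h2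
    · nlinarith [mul_nonneg hu (sub_nonneg.2 h2), mul_le_mul htuv htuv ht (add_nonneg hu hv)]
    · rcases le_or_gt 1 v with h3 | h3
      · nlinarith
      · nlinarith [sq_nonneg (2 - v)]
  · nlinarith [sq_nonneg (v - 1)]

lemma le_mul_Phi1_div {c t : ℝ} (hc : 0 < c) (hct : c ≤ t) : t ≤ c * Phi1 (t / c) := by
  calc t = c * (t / c) := by field_simp
    _ ≤ c * Phi1 (t / c) := by gcongr; exact le_Phi1 ((one_le_div hc).2 hct)

lemma sq_eq_sq_mul_Phi1_div {c t : ℝ} (hc : 0 < c) (htc : t ≤ c) :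
    t ^ 2 = c ^ 2 * Phi1 (t / c) := by
  rw [Phi1_of_le_one ((div_le_one hc).2 htc)]
  field_simp

section

variable {X B : Type*} [MeasurableSpace X] [NormedAddCommGroup B] {μ : Measure X}

lemma integrable_and_integral_le_of_lintegral_le {F : X → ℝ} {a : ℝ} (ha : 0 ≤ a)
    (hF : AEStronglyMeasurable F μ) (hF0 : 0 ≤ F)
    (hFa : ∫⁻ x, ENNReal.ofReal (F x) ∂μ ≤ ENNReal.ofReal a) :
    Integrable F μ ∧ ∫ x, F x ∂μ ≤ a := by
  refine ⟨⟨hF, ?_⟩, ?_⟩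
  · rw [hasFiniteIntegral_iff_ofReal (ae_of_all _ hF0)]
    exact hFa.trans_lt ENNReal.ofReal_lt_top
  · rw [integral_eq_lintegral_of_nonneg_ae (ae_of_all _ hF0) hF]
    exact ENNReal.toReal_le_of_le_ofReal ha hFa

lemma lintegral_ofReal_le_of_le_mul {φ F : X → ℝ} {a : ℝ} (ha : 0 ≤ a) (hF : ∀ x, F x ≤ a * φ x)
    (hφ : ∫⁻ x, ENNReal.ofReal (φ x) ∂μ ≤ 1) :
    ∫⁻ x, ENNReal.ofReal (F x) ∂μ ≤ ENNReal.ofReal a :=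
  calc ∫⁻ x, ENNReal.ofReal (F x) ∂μ ≤ ∫⁻ x, ENNReal.ofReal a * ENNReal.ofReal (φ x) ∂μ :=
        lintegral_mono fun x => (ENNReal.ofReal_le_ofReal (hF x)).trans_eq (ENNReal.ofReal_mul ha)
    _ = ENNReal.ofReal a * ∫⁻ x, ENNReal.ofReal (φ x) ∂μ :=
        lintegral_const_mul' _ _ ENNReal.ofReal_ne_top
    _ ≤ ENNReal.ofReal a := mul_le_of_le_one_right' hφ

lemma sumL1L2_le_of_lintegral_Phi1_le_one {f : X → B} (hf : AEStronglyMeasurable f μ) {c : ℝ}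
    (hc : 0 < c) (hI : ∫⁻ x, ENNReal.ofReal (Phi1 (‖f x‖ / c)) ∂μ ≤ 1) :
    sumL1L2 μ f ≤ 2 * ENNReal.ofReal c := by
  set S := {x | c < ‖f x‖}
  have hS : NullMeasurableSet S μ := nullMeasurableSet_lt aemeasurable_const hf.norm.aemeasurable
  have hg : AEStronglyMeasurable (S.indicator f) μ := hf.indicator₀ hS
  have hh : AEStronglyMeasurable (Sᶜ.indicator f) μ := hf.indicator₀ hS.compl
  have hg_le : ∀ x, ‖S.indicator f x‖ ≤ c * Phi1 (‖f x‖ / c) := by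
    intro x
    by_cases hx : x ∈ S
    · rw [Set.indicator_of_mem hx]
      exact le_mul_Phi1_div hc (le_of_lt hx)
    · rw [Set.indicator_of_notMem hx, norm_zero]
      exact mul_nonneg hc.le (Phi1_nonneg _)
  have hh_le : ∀ x, ‖Sᶜ.indicator f x‖ ^ 2 ≤ c ^ 2 * Phi1 (‖f x‖ / c) := by
    intro x
    by_cases hx : x ∈ S
    · rw [Set.indicator_of_notMem (Set.notMem_compl_iff.2 hx), norm_zero, zero_pow two_ne_zero]
      exact mul_nonneg (sq_nonneg c) (Phi1_nonneg _)
    · rw [Set.indicator_of_mem hx]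
      exact (sq_eq_sq_mul_Phi1_div hc (not_lt.1 hx)).le
  obtain ⟨hg_int, hg_norm⟩ := integrable_and_integral_le_of_lintegral_le hc.le hg.norm
    (fun x => norm_nonneg _) (lintegral_ofReal_le_of_le_mul hc.le hg_le hI)
  obtain ⟨hh_int, hh_norm⟩ := integrable_and_integral_le_of_lintegral_le
    (F := fun x => ‖Sᶜ.indicator f x‖ ^ 2) (sq_nonneg c) (hh.norm.pow 2) (fun x => sq_nonneg _)
    (lintegral_ofReal_le_of_le_mul (sq_nonneg c) hh_le hI)
  refine sInf_le_of_le ⟨S.indicator f, Sᶜ.indicator f, (integrable_norm_iff hg).1 hg_int,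
    (memLp_two_iff_integrable_sq_norm hh).2 hh_int,
    .of_forall fun x => (congrFun (Set.indicator_self_add_compl S f) x).symm, rfl⟩ ?_
  rw [← ENNReal.ofReal_ofNat 2, ← ENNReal.ofReal_mul zero_le_two]
  gcongr
  calc _ ≤ c + Real.sqrt (c ^ 2) := by gcongr
    _ = 2 * c := by rw [Real.sqrt_sq hc.le]; ring

lemma luxNorm_le_ofReal {f : X → B} {k : ℝ} (hk : 0 < k)
    (hI : ∫⁻ x, ENNReal.ofReal (Phi1 (‖f x‖ / k)) ∂μ ≤ 1) : luxNorm μ f ≤ ENNReal.ofReal k :=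
  sInf_le ⟨ENNReal.ofReal_pos.2 hk, ENNReal.ofReal_ne_top, by rwa [ENNReal.toReal_ofReal hk.le]⟩

lemma lintegral_Phi1_le_one_of_ae_eq_add {f g h : X → B} (hg : Integrable g μ)
    (hh : MemLp h 2 μ) (hfgh : f =ᵐ[μ] g + h) {k : ℝ}
    (hk : 2 * ((∫ x, ‖g x‖ ∂μ) + Real.sqrt (∫ x, ‖h x‖ ^ 2 ∂μ)) ≤ k) (hk0 : 0 < k) :
    ∫⁻ x, ENNReal.ofReal (Phi1 (‖f x‖ / k)) ∂μ ≤ 1 := by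
  set G := ∫ x, ‖g x‖ ∂μ
  set H := Real.sqrt (∫ x, ‖h x‖ ^ 2 ∂μ)
  have hh_sq : Integrable (fun x => ‖h x‖ ^ 2) μ :=
    (memLp_two_iff_integrable_sq_norm hh.aestronglyMeasurable).1 hh
  have hH : ∫ x, ‖h x‖ ^ 2 ∂μ = H ^ 2 :=
    (Real.sq_sqrt (integral_nonneg fun x => by positivity)).symm
  have hG0 : 0 ≤ G := integral_nonneg fun x => norm_nonneg _
  have hH0 : 0 ≤ H := Real.sqrt_nonneg _
  have hg' : Integrable (fun x => 2 / k * ‖g x‖) μ := hg.norm.const_mul _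
  have hh' : Integrable (fun x => ‖h x‖ ^ 2 / k ^ 2) μ := hh_sq.div_const _
  have hsum : Integrable (fun x => 2 / k * ‖g x‖ + ‖h x‖ ^ 2 / k ^ 2) μ := hg'.add hh'
  have hpt : ∀ᵐ x ∂μ, Phi1 (‖f x‖ / k) ≤ 2 / k * ‖g x‖ + ‖h x‖ ^ 2 / k ^ 2 := by
    filter_upwards [hfgh] with x hx
    refine (Phi1_le_two_mul_add_sq (u := ‖g x‖ / k) (v := ‖h x‖ / k) (by positivity)
      (by positivity) (by positivity) ?_).trans_eq (by ring)
    rw [← add_div, hx]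
    gcongr
    exact norm_add_le _ _
  calc ∫⁻ x, ENNReal.ofReal (Phi1 (‖f x‖ / k)) ∂μ
      ≤ ∫⁻ x, ENNReal.ofReal (2 / k * ‖g x‖ + ‖h x‖ ^ 2 / k ^ 2) ∂μ :=
        lintegral_mono_ae (hpt.mono fun x hx => ENNReal.ofReal_le_ofReal hx)
    _ = ENNReal.ofReal (2 / k * G + H ^ 2 / k ^ 2) := by
        rw [← ofReal_integral_eq_lintegral_ofReal hsum (.of_forall fun x => by positivity),
          integral_add hg' hh', integral_const_mul, integral_div, hH]
    _ ≤ 1 := by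
        rw [← ENNReal.ofReal_one]
        gcongr
        calc 2 / k * G + H ^ 2 / k ^ 2 = (2 * G * k + H ^ 2) / k ^ 2 := by field_simp
          _ ≤ 1 := div_le_one_of_le₀ (by nlinarith) (by positivity)

lemma luxNorm_le_of_ae_eq_add {f g h : X → B} (hg : Integrable g μ) (hh : MemLp h 2 μ)
    (hfgh : f =ᵐ[μ] g + h) :
    luxNorm μ f ≤ 2 * ENNReal.ofReal ((∫ x, ‖g x‖ ∂μ) + Real.sqrt (∫ x, ‖h x‖ ^ 2 ∂μ)) := by
  rw [← ENNReal.ofReal_ofNat 2, ← ENNReal.ofReal_mul zero_le_two]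
  set s := 2 * ((∫ x, ‖g x‖ ∂μ) + Real.sqrt (∫ x, ‖h x‖ ^ 2 ∂μ))
  have hs : 0 ≤ s := by positivity
  refine ENNReal.le_of_forall_pos_le_add fun ε hε _ => ?_
  have hk : 0 < s + ε := by positivity
  rw [← ENNReal.ofReal_coe_nnreal, ← ENNReal.ofReal_add hs ε.coe_nonneg]
  exact luxNorm_le_ofReal hk
    (lintegral_Phi1_le_one_of_ae_eq_add hg hh hfgh (le_add_of_nonneg_right ε.2) hk)

end

theorem stmt16_general {X : Type*} [MeasurableSpace X] (μ : Measure X)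
    {B : Type*} [NormedAddCommGroup B]
    (f : X → B) (hf : StronglyMeasurable f) :
    (1 / 2 : ℝ≥0∞) * sumL1L2 μ f ≤ luxNorm μ f ∧ luxNorm μ f ≤ 2 * sumL1L2 μ f := by
  constructor
  · refine le_sInf fun k ⟨hk0, hk, hI⟩ => ?_
    have hA := sumL1L2_le_of_lintegral_Phi1_le_one hf.aestronglyMeasurable
      (ENNReal.toReal_pos hk0.ne' hk) hI
    rw [ENNReal.ofReal_toReal hk] at hA
    calc (1 / 2 : ℝ≥0∞) * sumL1L2 μ f ≤ 1 / 2 * (2 * k) := by gcongr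
      _ = k := by rw [← mul_assoc, one_div, ENNReal.inv_mul_cancel (by simp) (by simp), one_mul]
  · rw [mul_comm, ← ENNReal.div_le_iff_le_mul (by simp) (by simp)]
    refine le_sInf ?_
    rintro _ ⟨g, h, hg, hh, hfgh, rfl⟩
    exact ENNReal.div_le_of_le_mul' (luxNorm_le_of_ae_eq_add hg hh hfgh)

/-- Lemma `whatever`: the Luxemburg norm `‖f‖_{Φ₁}` is equivalent, with
constants `1/2` and `2`, to the infimum of `‖g‖_{L¹} + ‖h‖_{L²}` over decompositions
`f = g + h`. -/
theorem stmt16 {X : Type*} [MeasurableSpace X] (μ : Measure X) [SigmaFinite μ]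
    {B : Type*} [NormedAddCommGroup B] [NormedSpace ℝ B] [CompleteSpace B]
    (f : X → B) (hf : StronglyMeasurable f) :
    (1 / 2 : ℝ≥0∞) * sumL1L2 μ f ≤ luxNorm μ f ∧ luxNorm μ f ≤ 2 * sumL1L2 μ f :=
  stmt16_general μ f hf
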